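/- The sum Σ_{j=1}^n A_j with A_j = i·I^⊗(n-j) ⊗ (σ₀₁ ⊗ σ₁₀^⊗(j-1) − σ₁₀ ⊗ σ₀₁^⊗(j-1)) equals i(S⁻ − S⁺), i.e. 2l times i·D±, the Hermitian generator of the central-difference evolution with Dirichlet boundary conditions. -/

import Mathlib

open Matrix Complex

noncomputable section

lemma tens_bpos {a b : ℕ} (i : Fin (a * b)) : 0 < b :=
  Nat.pos_of_ne_zero fun h => absurd i.isLt (by simp [h])

/-- Kronecker (tensor) product of square matrices, with the leftmost factor acting on
the most significant part of the index. -/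
def tens {a b : ℕ} (A : Matrix (Fin a) (Fin a) ℂ) (B : Matrix (Fin b) (Fin b) ℂ) :
    Matrix (Fin (a * b)) (Fin (a * b)) ℂ := fun i j =>
  A ⟨i.val / b, Nat.div_lt_of_lt_mul (i.isLt.trans_eq (Nat.mul_comm a b))⟩
      ⟨j.val / b, Nat.div_lt_of_lt_mul (j.isLt.trans_eq (Nat.mul_comm a b))⟩ *
    B ⟨i.val % b, Nat.mod_lt _ (tens_bpos i)⟩ ⟨j.val % b, Nat.mod_lt _ (tens_bpos j)⟩

def I2 : Matrix (Fin 2) (Fin 2) ℂ := 1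
def s00 : Matrix (Fin 2) (Fin 2) ℂ := !![1, 0; 0, 0]
def s01 : Matrix (Fin 2) (Fin 2) ℂ := !![0, 1; 0, 0]
def s10 : Matrix (Fin 2) (Fin 2) ℂ := !![0, 0; 1, 0]
def s11 : Matrix (Fin 2) (Fin 2) ℂ := !![0, 0; 0, 1]
def pauliX : Matrix (Fin 2) (Fin 2) ℂ := !![0, 1; 1, 0]
def pauliZ : Matrix (Fin 2) (Fin 2) ℂ := !![1, 0; 0, -1]

/-- `k`-fold tensor power of a one-qubit operator. -/
def tensPow (M : Matrix (Fin 2) (Fin 2) ℂ) : (k : ℕ) → Matrix (Fin (2 ^ k)) (Fin (2 ^ k)) ℂ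
  | 0 => 1
  | k + 1 => tens (tensPow M k) M

lemma pow_split {n j : ℕ} (h1 : 1 ≤ j) (h2 : j ≤ n) :
    2 ^ (n - j) * 2 * 2 ^ (j - 1) = 2 ^ n := by
  rw [mul_assoc, ← pow_succ', ← pow_add]; congr 1; omega

lemma two_pow_split {j : ℕ} (h : 1 ≤ j) : 2 * 2 ^ (j - 1) = 2 ^ j := by
  rw [← pow_succ']; congr 1; omega

/-- The backward shift operator `S⁻` : entries `S⁻[k-1,k] = 1`. -/
def Sminus (n : ℕ) : Matrix (Fin (2 ^ n)) (Fin (2 ^ n)) ℂ := fun i j =>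
  if i.val + 1 = j.val then 1 else 0

/-- The forward shift operator `S⁺` : entries `S⁺[k,k-1] = 1`. -/
def Splus (n : ℕ) : Matrix (Fin (2 ^ n)) (Fin (2 ^ n)) ℂ := fun i j =>
  if j.val + 1 = i.val then 1 else 0

/-- `A_j = i·I^⊗(n-j) ⊗ (σ₀₁ ⊗ σ₁₀^⊗(j-1) − σ₁₀ ⊗ σ₀₁^⊗(j-1))` acting on `(ℂ²)^⊗n`. -/
def Amat (n j : ℕ) : Matrix (Fin (2 ^ n)) (Fin (2 ^ n)) ℂ :=
  if h : 1 ≤ j ∧ j ≤ n then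
    Complex.I • (Matrix.reindex (finCongr (pow_split h.1 h.2)) (finCongr (pow_split h.1 h.2))
      (tens (tens (tensPow I2 (n - j)) s01) (tensPow s10 (j - 1)) -
        tens (tens (tensPow I2 (n - j)) s10) (tensPow s01 (j - 1))))
  else 0

/-- Spectral (operator) norm of a square complex matrix. -/
def specNorm {m : ℕ} (M : Matrix (Fin m) (Fin m) ℂ) : ℝ :=
  ‖Matrix.toEuclideanCLM (𝕜 := ℂ) M‖



lemma sideA_iff (b x y : ℕ) (hb : 0 < b) :
    (x / b / 2 = y / b / 2 ∧ x / b % 2 = 0 ∧ y / b % 2 = 1 ∧ x % b = b - 1 ∧ y % b = 0)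
    ↔ ∃ k, x = 2 * b * k + (b - 1) ∧ y = 2 * b * k + b := by
  constructor
  · rintro ⟨h1, h2, h3, h4, h5⟩
    refine ⟨x / b / 2, ?_, ?_⟩
    · have hx := Nat.div_add_mod x b
      have hx2 := Nat.div_add_mod (x / b) 2
      rw [h2, Nat.add_zero] at hx2
      rw [h4] at hx
      calc x = b * (x / b) + (b - 1) := hx.symm
        _ = b * (2 * (x / b / 2)) + (b - 1) := by rw [hx2]
        _ = 2 * b * (x / b / 2) + (b - 1) := by ring_nf
    · have hy := Nat.div_add_mod y b
      have hy2 := Nat.div_add_mod (y / b) 2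
      rw [h3] at hy2
      rw [h5, Nat.add_zero] at hy
      calc y = b * (y / b) := hy.symm
        _ = b * (2 * (y / b / 2) + 1) := by rw [hy2]
        _ = b * (2 * (x / b / 2) + 1) := by rw [h1]
        _ = 2 * b * (x / b / 2) + b := by ring_nf
  · rintro ⟨k, rfl, rfl⟩
    have e1 : 2 * b * k + (b - 1) = b * (2 * k) + (b - 1) := by ring_nf
    have e2 : 2 * b * k + b = b * (2 * k + 1) + 0 := by
      rw [Nat.add_zero, Nat.mul_add, Nat.mul_one]; ring_nf
    rw [e1, e2]
    simp only [Nat.mul_add_div hb, Nat.mul_add_mod]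
    rw [Nat.div_eq_of_lt (show b - 1 < b by omega), Nat.zero_div,
      Nat.mod_eq_of_lt (show b - 1 < b by omega), Nat.zero_mod]
    exact ⟨by omega, rfl, by omega, rfl, Nat.zero_mod b⟩

lemma sideB_iff (b x y : ℕ) (hb : 0 < b) :
    (x % (2 * b) = b - 1 ∧ y = x + 1)
    ↔ ∃ k, x = 2 * b * k + (b - 1) ∧ y = 2 * b * k + b := by
  constructor
  · rintro ⟨h1, rfl⟩
    have h := Nat.div_add_mod x (2 * b)
    rw [h1] at h
    exact ⟨x / (2 * b), by omega, by omega⟩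
  · rintro ⟨k, rfl, rfl⟩
    refine ⟨?_, by omega⟩
    rw [Nat.mul_add_mod, Nat.mod_eq_of_lt (by omega)]

lemma exists_unique_j (n x : ℕ) (hx : x + 1 < 2 ^ n) :
    ∃! j, j ∈ Finset.Icc 1 n ∧ x % 2 ^ j = 2 ^ (j - 1) - 1 := by
  have hex : ∀ n x, x + 1 < 2 ^ n → ∃ j, 1 ≤ j ∧ j ≤ n ∧ x % 2 ^ j = 2 ^ (j - 1) - 1 := by
    intro n
    induction n with
    | zero => intro x hx; simp at hx
    | succ n ih =>
      intro x hx
      rcases Nat.even_or_odd x with he | ho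
      · refine ⟨1, le_refl 1, by omega, ?_⟩
        simpa [pow_one] using Nat.even_iff.mp he
      · obtain ⟨m, rfl⟩ := ho
        have hm : m + 1 < 2 ^ n := by rw [pow_succ] at hx; omega
        obtain ⟨j, hj1, hj2, hj3⟩ := ih m hm
        refine ⟨j + 1, by omega, by omega, ?_⟩
        have h2j : (0:ℕ) < 2 ^ j := Nat.pow_pos (by norm_num)
        have hmlt : m % 2 ^ j < 2 ^ j := Nat.mod_lt _ h2j
        have key : (2 * m + 1) % 2 ^ (j + 1) = 2 * (m % 2 ^ j) + 1 := by
          have h1 : 2 * m + 1 = 2 ^ (j + 1) * (m / 2 ^ j) + (2 * (m % 2 ^ j) + 1) := by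
            rw [pow_succ]
            conv_lhs => rw [← Nat.div_add_mod m (2 ^ j)]
            ring
          rw [h1, Nat.mul_add_mod, Nat.mod_eq_of_lt (by rw [pow_succ]; omega)]
        rw [key, hj3]
        have e : 2 ^ (j + 1 - 1) = 2 * 2 ^ (j - 1) := by
          rw [← pow_succ']; congr 1; omega
        have h2j1 : (0:ℕ) < 2 ^ (j - 1) := Nat.pow_pos (by norm_num)
        have e2 : (2:ℕ) ^ j = 2 * 2 ^ (j - 1) := by rw [← pow_succ']; congr 1; omega
        omega
  obtain ⟨j, hj1, hj2, hj3⟩ := hex n x hx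
  refine ⟨j, ⟨Finset.mem_Icc.mpr ⟨hj1, hj2⟩, hj3⟩, ?_⟩
  have key : ∀ a c, 1 ≤ a → a < c → x % 2 ^ a = 2 ^ (a - 1) - 1 →
      x % 2 ^ c ≠ 2 ^ (c - 1) - 1 := by
    intro a c ha hac hxa h
    have hd : (2:ℕ) ^ a ∣ 2 ^ (c - 1) := pow_dvd_pow 2 (by omega)
    have hmm : x % 2 ^ a = (x % 2 ^ c) % 2 ^ a :=
      (Nat.mod_mod_of_dvd x (pow_dvd_pow 2 (by omega))).symm
    rw [h] at hmm
    obtain ⟨t, ht⟩ := hd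
    have h2a : (0:ℕ) < 2 ^ a := Nat.pow_pos (by norm_num)
    have h2c1 : (0:ℕ) < 2 ^ (c - 1) := Nat.pow_pos (by norm_num)
    have ht1 : 1 ≤ t := by
      rcases Nat.eq_zero_or_pos t with h0 | h1
      · rw [h0, Nat.mul_zero] at ht; omega
      · exact h1
    have calc1 : (2 ^ (c - 1) - 1) % 2 ^ a = 2 ^ a - 1 := by
      rw [ht]
      have h2 : 2 ^ a * t - 1 = 2 ^ a * (t - 1) + (2 ^ a - 1) := by
        have h3 : 2 ^ a * t = 2 ^ a * (t - 1) + 2 ^ a := by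
          rw [← Nat.mul_succ]; congr 1; omega
        omega
      rw [h2, Nat.mul_add_mod, Nat.mod_eq_of_lt (by omega)]
    have h2a1 : 2 ^ (a - 1) < 2 ^ a := Nat.pow_lt_pow_right (by norm_num) (by omega)
    have h2a1' : (0:ℕ) < 2 ^ (a - 1) := Nat.pow_pos (by norm_num)
    omega
  rintro c ⟨hcm, hc⟩
  rw [Finset.mem_Icc] at hcm
  by_contra hne
  rcases Nat.lt_or_ge j c with h | h
  · exact key j c hj1 h hj3 hc
  · exact key c j hcm.1 (by omega) hc hj3

lemma chi_mul_chi (P Q : Prop) [Decidable P] [Decidable Q] :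
    (if P then (1:ℂ) else 0) * (if Q then (1:ℂ) else 0) = if P ∧ Q then 1 else 0 := by
  split_ifs <;> simp_all

lemma s01_apply (i j : Fin 2) : s01 i j = if i.val = 0 ∧ j.val = 1 then 1 else 0 := by
  fin_cases i <;> fin_cases j <;> simp [s01]

lemma s10_apply (i j : Fin 2) : s10 i j = if i.val = 1 ∧ j.val = 0 then 1 else 0 := by
  fin_cases i <;> fin_cases j <;> simp [s10]

lemma I2_apply (i j : Fin 2) : I2 i j = if i.val = j.val then 1 else 0 := by
  fin_cases i <;> fin_cases j <;> simp [I2, Matrix.one_apply]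

lemma tens_apply {a b : ℕ} (A : Matrix (Fin a) (Fin a) ℂ) (B : Matrix (Fin b) (Fin b) ℂ)
    (i j : Fin (a * b)) :
    tens A B i j =
      A ⟨i.val / b, Nat.div_lt_of_lt_mul (i.isLt.trans_eq (Nat.mul_comm a b))⟩
          ⟨j.val / b, Nat.div_lt_of_lt_mul (j.isLt.trans_eq (Nat.mul_comm a b))⟩ *
        B ⟨i.val % b, Nat.mod_lt _ (tens_bpos i)⟩ ⟨j.val % b, Nat.mod_lt _ (tens_bpos j)⟩ := rfl

lemma tensPow_s10_apply (k : ℕ) (i j : Fin (2 ^ k)) :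
    tensPow s10 k i j = if i.val = 2 ^ k - 1 ∧ j.val = 0 then 1 else 0 := by
  induction k with
  | zero =>
    have hi0 : i.val = 0 := by have := i.isLt; omega
    have hj0 : j.val = 0 := by have := j.isLt; omega
    have hij : i = j := Fin.ext (by omega)
    norm_num [tensPow, Matrix.one_apply, hij, hi0, hj0]
  | succ k ih =>
    show tens (tensPow s10 k) s10 i j = _
    rw [tens_apply (tensPow s10 k) s10 i j, ih, s10_apply, chi_mul_chi]
    have hi := i.isLt
    have hj := j.isLt
    have hp : (2:ℕ) ^ (k+1) = 2 ^ k * 2 := pow_succ 2 k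
    have h2k : (0:ℕ) < 2 ^ k := Nat.pow_pos (by norm_num)
    congr 1
    simp only [eq_iff_iff]
    omega

lemma tensPow_s01_apply (k : ℕ) (i j : Fin (2 ^ k)) :
    tensPow s01 k i j = if i.val = 0 ∧ j.val = 2 ^ k - 1 then 1 else 0 := by
  induction k with
  | zero =>
    have hi0 : i.val = 0 := by have := i.isLt; omega
    have hj0 : j.val = 0 := by have := j.isLt; omega
    have hij : i = j := Fin.ext (by omega)
    norm_num [tensPow, Matrix.one_apply, hij, hi0, hj0]
  | succ k ih =>
    show tens (tensPow s01 k) s01 i j = _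
    rw [tens_apply (tensPow s01 k) s01 i j, ih, s01_apply, chi_mul_chi]
    have hi := i.isLt
    have hj := j.isLt
    have hp : (2:ℕ) ^ (k+1) = 2 ^ k * 2 := pow_succ 2 k
    have h2k : (0:ℕ) < 2 ^ k := Nat.pow_pos (by norm_num)
    congr 1
    simp only [eq_iff_iff]
    omega

lemma tensPow_I2_apply (k : ℕ) (i j : Fin (2 ^ k)) :
    tensPow I2 k i j = if i.val = j.val then 1 else 0 := by
  induction k with
  | zero =>
    have hi0 : i.val = 0 := by have := i.isLt; omega
    have hj0 : j.val = 0 := by have := j.isLt; omega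
    have hij : i = j := Fin.ext (by omega)
    norm_num [tensPow, Matrix.one_apply, hij, hi0, hj0]
  | succ k ih =>
    show tens (tensPow I2 k) I2 i j = _
    rw [tens_apply (tensPow I2 k) I2 i j, ih, I2_apply, chi_mul_chi]
    have hi := i.isLt
    have hj := j.isLt
    congr 1
    simp only [eq_iff_iff]
    omega


lemma Amat_apply (n j : ℕ) (h1 : 1 ≤ j) (h2 : j ≤ n) (x y : Fin (2 ^ n)) :
    Amat n j x y = Complex.I *
      ((if (x:ℕ) % 2 ^ j = 2 ^ (j - 1) - 1 ∧ (y:ℕ) = (x:ℕ) + 1 then 1 else 0) -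
       (if (y:ℕ) % 2 ^ j = 2 ^ (j - 1) - 1 ∧ (x:ℕ) = (y:ℕ) + 1 then 1 else 0)) := by
  have hj : 1 ≤ j ∧ j ≤ n := ⟨h1, h2⟩
  have hb : (0:ℕ) < 2 ^ (j - 1) := Nat.pow_pos (by norm_num)
  have master : ∀ u v : ℕ,
      ((u / 2 ^ (j-1) / 2 = v / 2 ^ (j-1) / 2 ∧ (u / 2 ^ (j-1) % 2 = 0 ∧ v / 2 ^ (j-1) % 2 = 1)) ∧
        (u % 2 ^ (j-1) = 2 ^ (j-1) - 1 ∧ v % 2 ^ (j-1) = 0)) ↔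
      (u % 2 ^ j = 2 ^ (j-1) - 1 ∧ v = u + 1) := by
    intro u v
    have hA := sideA_iff (2 ^ (j-1)) u v hb
    have hB := sideB_iff (2 ^ (j-1)) u v hb
    rw [two_pow_split h1] at hA hB
    rw [hB, ← hA]
    tauto
  have master2 : ∀ u v : ℕ,
      ((u / 2 ^ (j-1) / 2 = v / 2 ^ (j-1) / 2 ∧ (u / 2 ^ (j-1) % 2 = 1 ∧ v / 2 ^ (j-1) % 2 = 0)) ∧
        (u % 2 ^ (j-1) = 0 ∧ v % 2 ^ (j-1) = 2 ^ (j-1) - 1)) ↔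
      (v % 2 ^ j = 2 ^ (j-1) - 1 ∧ u = v + 1) := by
    intro u v
    constructor
    · rintro ⟨⟨p, q1, q2⟩, r1, r2⟩
      exact (master v u).mp ⟨⟨p.symm, q2, q1⟩, r2, r1⟩
    · intro h
      obtain ⟨⟨p, q2, q1⟩, r2, r1⟩ := (master v u).mpr h
      exact ⟨⟨p.symm, q1, q2⟩, r1, r2⟩
  unfold Amat
  rw [dif_pos hj]
  simp only [Matrix.smul_apply, Matrix.reindex_apply, Matrix.submatrix_apply,
    Matrix.sub_apply, finCongr_symm, finCongr_apply, smul_eq_mul, tens_apply,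
    tensPow_I2_apply, tensPow_s10_apply, tensPow_s01_apply, s01_apply, s10_apply,
    Fin.coe_cast, chi_mul_chi, master, master2]

lemma sum_chi (n : ℕ) (x y : Fin (2 ^ n)) :
    ∑ j ∈ Finset.Icc 1 n,
        (if (x:ℕ) % 2 ^ j = 2 ^ (j - 1) - 1 ∧ (y:ℕ) = (x:ℕ) + 1 then (1:ℂ) else 0) =
      if (x:ℕ) + 1 = (y:ℕ) then 1 else 0 := by
  by_cases hxy : (y:ℕ) = (x:ℕ) + 1
  · rw [if_pos (by omega)]
    have hx : (x:ℕ) + 1 < 2 ^ n := by rw [← hxy]; exact y.isLt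
    obtain ⟨j₀, ⟨hj₀m, hj₀⟩, huniq⟩ := exists_unique_j n (x:ℕ) hx
    rw [Finset.sum_eq_single j₀]
    · rw [if_pos ⟨hj₀, hxy⟩]
    · intro c hc hne
      rw [if_neg]
      rintro ⟨hc1, -⟩
      exact hne (huniq c ⟨hc, hc1⟩)
    · intro h; exact absurd hj₀m h
  · rw [if_neg (by omega)]
    apply Finset.sum_eq_zero
    intro c _
    rw [if_neg]
    rintro ⟨-, h⟩
    exact hxy h

/-- `Σ_{j=1}^n A_j = i(S⁻ − S⁺) = (2l)·(i·D±)`. -/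
theorem Amat_sum (n : ℕ) (hn : 1 ≤ n) (l : ℝ) (hl : 0 < l) :
    ∑ j ∈ Finset.Icc 1 n, Amat n j = Complex.I • (Sminus n - Splus n) ∧
      ∑ j ∈ Finset.Icc 1 n, Amat n j =
        (2 * (l : ℂ)) • (Complex.I • ((1 / (2 * (l : ℂ))) • (Sminus n - Splus n))) := by
  have main : ∑ j ∈ Finset.Icc 1 n, Amat n j = Complex.I • (Sminus n - Splus n) := by
    ext x y
    rw [Matrix.sum_apply,
      Finset.sum_congr rfl (fun j hj => Amat_apply n j (Finset.mem_Icc.mp hj).1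
        (Finset.mem_Icc.mp hj).2 x y),
      ← Finset.mul_sum, Finset.sum_sub_distrib, sum_chi n x y, sum_chi n y x]
    simp [Sminus, Splus, Matrix.smul_apply, Matrix.sub_apply, smul_eq_mul]
  refine ⟨main, ?_⟩
  rw [main, smul_smul, smul_smul]
  congr 1
  have hl0 : (2 * (l:ℂ)) ≠ 0 := by
    simp only [ne_eq, mul_eq_zero, OfNat.ofNat_ne_zero, false_or]
    exact_mod_cast hl.ne'
  have hl1 : (l:ℂ) ≠ 0 := by exact_mod_cast hl.ne'
  field_simp

end
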